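/- If M is a matroid on E = {1,…,d} whose toric ideal J_M is generated by quadratic binomials, then for every c ∈ E the toric ideal of the parallel extension of M at c by d+1, i.e. of the matroid (M* +_c (d+1))*, is generated by quadratic binomials. -/

import Mathlib

open MvPolynomial


section Toric

/-- The toric (bases monomial) map of a matroid: the variables are indexed by the bases of `M`,
and the variable of a basis `B` is sent to `∏_{l ∈ B} s_l`. -/
noncomputable def matroidToricMap (K : Type) [Field K] {α : Type} [Fintype α] [DecidableEq α]
    (M : Matroid α) :
    MvPolynomial {B : Finset α // M.IsBase ↑B} K →ₐ[K] MvPolynomial α K :=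
  aeval fun b => ∏ l ∈ b.1, X l

/-- The toric ideal `J_M` of a matroid `M`. -/
noncomputable def matroidToricIdeal (K : Type) [Field K] {α : Type} [Fintype α] [DecidableEq α]
    (M : Matroid α) : Ideal (MvPolynomial {B : Finset α // M.IsBase ↑B} K) :=
  RingHom.ker (matroidToricMap K M).toRingHom

/-- `G` consists of quadratic binomials `x_i x_j - x_k x_l`. -/
def IsQuadBinomialSet {σ K : Type} [Field K] (G : Set (MvPolynomial σ K)) : Prop :=
  ∀ f ∈ G, ∃ i j k l : σ, f = X i * X j - X k * X l

/-- The ideal `I` is generated by quadratic binomials. -/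
def GeneratedByQuadBinomials {σ K : Type} [Field K] (I : Ideal (MvPolynomial σ K)) : Prop :=
  ∃ G : Set (MvPolynomial σ K), IsQuadBinomialSet G ∧ Ideal.span G = I

end Toric

/-!
A toric ideal is generated by quadratic binomials exactly when the kernel congruence of its
exponent map is generated by moves between exponents of degree two: the kernel of a monomial map
is spanned by binomials, and a binomial lies in an ideal generated by binomials iff its two
exponents are related by the congruence these generators generate.

Every base of the parallel extension `N` of `M` at `c` is a base `b` of `M`, or `b - c + e` when
`c ∈ b`, where `e` is the new element. Hence a monomial in the bases of `N` is determined, up to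
the toric relation, by its image in the bases of `M` together with the number of its factors
containing `e`. Two monomials with the same image and the same count are joined by the
quadratic swaps `x_T x_{S'} ↔ x_S x_{T'}` with `T, S` and `T', S'` lying over the same base of
`M`. A chain of quadratic moves between the images in `M` then lifts move by move, because over
every intermediate monomial there are lifts realising each admissible count of `e`.
-/

open Finsupp Function

section ToricMap

variable {K : Type} [Field K] {σ τ : Type}

noncomputable def toricMap (E : (σ →₀ ℕ) →+ (τ →₀ ℕ)) :
    MvPolynomial σ K →ₐ[K] MvPolynomial τ K :=
  AddMonoidAlgebra.mapDomainAlgHom K K E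

@[simp]
lemma toricMap_monomial (E : (σ →₀ ℕ) →+ (τ →₀ ℕ)) (u : σ →₀ ℕ) (a : K) :
    toricMap E (monomial u a) = monomial (E u) a :=
  AddMonoidAlgebra.mapDomain_single

lemma toricMap_monomial_sub_monomial_eq_zero {E : (σ →₀ ℕ) →+ (τ →₀ ℕ)}
    {u v : σ →₀ ℕ} :
    toricMap E (monomial u (1 : K) - monomial v 1) = 0 ↔ E u = E v := by
  rw [map_sub, toricMap_monomial, toricMap_monomial, sub_eq_zero,
    MvPolynomial.monomial_left_inj one_ne_zero]

def binomialCon (I : Ideal (MvPolynomial σ K)) : AddCon (σ →₀ ℕ) where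
  r a b := monomial a (1 : K) - monomial b 1 ∈ I
  iseqv :=
    { refl := fun a => by simp
      symm := fun h => by simpa using I.neg_mem h
      trans := fun h₁ h₂ => by simpa using I.add_mem h₁ h₂ }
  add' {a b c d} h₁ h₂ := by
    have : monomial (a + c) (1 : K) - monomial (b + d) 1 = monomial c 1 *
        (monomial a 1 - monomial b 1) + monomial b 1 * (monomial c 1 - monomial d 1) := by
      simp only [mul_sub, monomial_mul, mul_one, add_comm c a, add_comm]
      ring
    rw [this]
    exact I.add_mem (I.mul_mem_left _ h₁) (I.mul_mem_left _ h₂)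

lemma addConGen_of_monomial_sub_mem_span {r : (σ →₀ ℕ) → (σ →₀ ℕ) → Prop}
    {G : Set (MvPolynomial σ K)}
    (hG : ∀ g ∈ G, ∃ a b, r a b ∧ g = monomial a 1 - monomial b 1)
    {u v : σ →₀ ℕ} (h : monomial u (1 : K) - monomial v 1 ∈ Ideal.span G) :
    addConGen r u v := by
  let θ : MvPolynomial σ K →+* AddMonoidAlgebra K (addConGen r).Quotient :=
    AddMonoidAlgebra.mapDomainRingHom K (addConGen r).mk'
  have hθ (a : σ →₀ ℕ) :
      θ (monomial a 1) = AddMonoidAlgebra.single (a : (addConGen r).Quotient) 1 :=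
    AddMonoidAlgebra.mapDomain_single
  have hspan : Ideal.span G ≤ RingHom.ker θ := by
    rw [Ideal.span_le]
    intro g hg
    obtain ⟨a, b, hab, rfl⟩ := hG g hg
    rw [SetLike.mem_coe, RingHom.mem_ker, map_sub, hθ, hθ,
      (AddCon.eq _).2 (AddConGen.Rel.of a b hab), sub_self]
  have := RingHom.mem_ker.1 (hspan h)
  rw [map_sub, hθ, hθ, sub_eq_zero] at this
  exact (AddCon.eq _).1 ((AddMonoidAlgebra.single_left_inj one_ne_zero).1 this)

lemma ker_toricMap_le {E : (σ →₀ ℕ) →+ (τ →₀ ℕ)} {I : Ideal (MvPolynomial σ K)}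
    (hI : ∀ u v, E u = E v → monomial u (1 : K) - monomial v 1 ∈ I) :
    RingHom.ker (toricMap (K := K) E).toRingHom ≤ I := by
  intro f hf
  -- `ψ` replaces each monomial by a chosen representative of its fibre under `E`
  let ψ (p : MvPolynomial σ K) : MvPolynomial σ K :=
    AddMonoidAlgebra.mapDomain (Function.invFun E) (toricMap E p)
  have hsub (p : MvPolynomial σ K) : p - ψ p ∈ I := by
    induction p using MvPolynomial.induction_on' with
    | monomial u a =>
      have hψ : ψ (monomial u a) = monomial (Function.invFun E (E u)) a := by
        simp only [ψ, toricMap_monomial]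
        exact AddMonoidAlgebra.mapDomain_single
      rw [hψ, show monomial u a - monomial (Function.invFun E (E u)) a
          = C a * (monomial u 1 - monomial (Function.invFun E (E u)) 1) by
        simp only [mul_sub, C_mul_monomial, mul_one]]
      exact I.mul_mem_left _ (hI _ _ (Function.invFun_eq ⟨u, rfl⟩).symm)
    | add p q hp hq =>
      simp only [ψ, map_add, AddMonoidAlgebra.mapDomain_add] at hp hq ⊢
      rw [add_sub_add_comm]
      exact I.add_mem hp hq
  have hψ : ψ f = 0 := by
    simp only [ψ]
    rw [show toricMap E f = 0 from RingHom.mem_ker.1 hf, AddMonoidAlgebra.mapDomain_zero]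
  simpa [hψ] using hsub f

def quadMoves (κ : AddCon (σ →₀ ℕ)) (a b : σ →₀ ℕ) : Prop :=
  a.degree = 2 ∧ b.degree = 2 ∧ κ a b

def IsGeneratedInDegreeTwo (κ : AddCon (σ →₀ ℕ)) : Prop :=
  κ ≤ addConGen (quadMoves κ)

lemma exists_eq_single_add_single_of_degree_eq_two {u : σ →₀ ℕ} (h : u.degree = 2) :
    ∃ i j, u = single i 1 + single j 1 := by
  have hcard : Multiset.card (toMultiset u) = 2 := by
    rw [card_toMultiset, ← h, degree_apply]; rfl
  obtain ⟨i, j, hij⟩ := Multiset.card_eq_two.1 hcard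
  refine ⟨i, j, ?_⟩
  classical
  rw [← Finsupp.toMultiset_toFinsupp u, hij, Multiset.insert_eq_cons, ← Multiset.singleton_add,
    Multiset.toFinsupp_add, Multiset.toFinsupp_singleton, Multiset.toFinsupp_singleton]

lemma X_mul_X_eq_monomial (i j : σ) :
    (X i * X j : MvPolynomial σ K) = monomial (single i 1 + single j 1) 1 := by
  rw [X, X, monomial_mul, mul_one]

theorem generatedByQuadBinomials_ker_toricMap_iff (E : (σ →₀ ℕ) →+ (τ →₀ ℕ)) :
    GeneratedByQuadBinomials (RingHom.ker (toricMap (K := K) E).toRingHom) ↔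
      IsGeneratedInDegreeTwo (AddCon.ker E) := by
  constructor
  · rintro ⟨G, hG, hspan⟩ u v huv
    refine addConGen_of_monomial_sub_mem_span (K := K) (G := G) ?_ ?_
    · intro g hg
      obtain ⟨i, j, k, l, rfl⟩ := hG g hg
      have hker := hspan ▸ Ideal.subset_span hg
      rw [X_mul_X_eq_monomial, X_mul_X_eq_monomial] at hker ⊢
      exact ⟨_, _, ⟨by simp, by simp, toricMap_monomial_sub_monomial_eq_zero.1 hker⟩, rfl⟩
    · rw [hspan]
      exact toricMap_monomial_sub_monomial_eq_zero.2 huv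
  · intro h
    let G : Set (MvPolynomial σ K) :=
      {f | ∃ a b, quadMoves (AddCon.ker E) a b ∧ f = monomial a 1 - monomial b 1}
    refine ⟨G, ?_, le_antisymm ?_ (ker_toricMap_le fun u v huv => ?_)⟩
    · rintro f ⟨a, b, ⟨ha, hb, -⟩, rfl⟩
      obtain ⟨i, j, rfl⟩ := exists_eq_single_add_single_of_degree_eq_two ha
      obtain ⟨k, l, rfl⟩ := exists_eq_single_add_single_of_degree_eq_two hb
      exact ⟨i, j, k, l, by rw [X_mul_X_eq_monomial, X_mul_X_eq_monomial]⟩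
    · rw [Ideal.span_le]
      rintro f ⟨a, b, ⟨-, -, hab⟩, rfl⟩
      exact toricMap_monomial_sub_monomial_eq_zero.2 hab
    · have hle : addConGen _ ≤ binomialCon (Ideal.span G) :=
        AddCon.addConGen_le.2 fun a b hab => Ideal.subset_span ⟨a, b, hab, rfl⟩
      exact hle (h huv)

end ToricMap

section Indicator

variable {α β : Type}

noncomputable def indicatorExp (s : Finset α) : α →₀ ℕ :=
  ∑ l ∈ s, single l 1

lemma indicatorExp_apply [DecidableEq α] (s : Finset α) (x : α) :
    indicatorExp s x = if x ∈ s then 1 else 0 := by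
  simp [indicatorExp, Finsupp.finsetSum_apply, single_apply]

lemma mapDomain_indicatorExp_image [DecidableEq β] {f : α → β} {g : β → α}
    (h : LeftInverse g f) (s : Finset α) :
    (indicatorExp (s.image f)).mapDomain g = indicatorExp s := by
  rw [indicatorExp, Finset.sum_image fun x _ y _ hxy => h.injective hxy]
  change mapDomain.addMonoidHom g _ = _
  simp [map_sum, h _, indicatorExp]

noncomputable def basesExponent (M : Matroid α) :
    ({B : Finset α // M.IsBase ↑B} →₀ ℕ) →+ (α →₀ ℕ) :=
  weight fun b => indicatorExp b.1

@[simp]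
lemma basesExponent_single (M : Matroid α) (b : {B : Finset α // M.IsBase ↑B}) :
    basesExponent M (single b 1) = indicatorExp b.1 := by
  rw [basesExponent, weight_single, one_smul]

lemma matroidToricIdeal_eq_ker_toricMap (K : Type) [Field K] [Fintype α] [DecidableEq α]
    (M : Matroid α) :
    matroidToricIdeal K M = RingHom.ker (toricMap (K := K) (basesExponent M)).toRingHom := by
  rw [matroidToricIdeal, matroidToricMap]
  congr 2
  refine MvPolynomial.algHom_ext fun b => ?_
  rw [aeval_X, X, toricMap_monomial, basesExponent_single, indicatorExp, monomial_sum_one]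
  rfl

end Indicator

section Fibre

variable {σ σ' : Type} (base : σ' → σ) (mark : σ' → ℕ)

noncomputable def baseWeight : (σ' →₀ ℕ) →+ (σ →₀ ℕ) × ℕ :=
  (mapDomain.addMonoidHom base).prod (weight mark)

@[simp]
lemma baseWeight_apply (u : σ' →₀ ℕ) :
    baseWeight base mark u = (u.mapDomain base, weight mark u) :=
  rfl

variable {base mark}

lemma single_add_sub_of_mem_support {u : σ' →₀ ℕ} {T : σ'} (hT : T ∈ u.support) :
    single T 1 + (u - single T 1) = u :=
  add_tsub_cancel_of_le (single_le_iff.2 (Nat.one_le_iff_ne_zero.2 (Finsupp.mem_support_iff.1 hT)))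

lemma exists_mem_support_base_eq {u v : σ' →₀ ℕ} (h : u.mapDomain base = v.mapDomain base)
    {T : σ'} (hT : T ∈ u.support) : ∃ S ∈ v.support, base S = base T := by
  classical
  have hmem : base T ∈ (u.mapDomain base).support := by
    rw [← single_add_sub_of_mem_support hT, mapDomain_add, mapDomain_single,
      Finsupp.mem_support_iff, Finsupp.add_apply, single_eq_same]
    omega
  rw [h] at hmem
  simpa using mapDomain_support hmem

lemma weight_eq_zero_iff {u : σ' →₀ ℕ} :
    weight mark u = 0 ↔ ∀ T ∈ u.support, mark T = 0 := by
  simp only [weight_apply, Finsupp.sum, smul_eq_mul, Finset.sum_eq_zero_iff, mul_eq_zero,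
    Finsupp.mem_support_iff]
  exact forall_congr' fun T => imp_congr_right fun h => or_iff_right h

lemma exists_mem_support_mark_ne (hinj : Injective fun T => (base T, mark T))
    {u v : σ' →₀ ℕ} (h : u.mapDomain base = v.mapDomain base)
    (hdisj : ∀ S ∈ u.support, S ∉ v.support) {T : σ'} (hT : T ∈ u.support) :
    ∃ S ∈ v.support, base S = base T ∧ mark S ≠ mark T := by
  obtain ⟨S, hS, hST⟩ := exists_mem_support_base_eq h hT
  refine ⟨S, hS, hST, fun hm => hdisj T hT ?_⟩
  rwa [← hinj (Prod.ext hST hm)]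

lemma exists_move_sharing_support (hmark : ∀ T, mark T ≤ 1)
    (hinj : Injective fun T => (base T, mark T)) {u v : σ' →₀ ℕ}
    (h : baseWeight base mark u = baseWeight base mark v) (hu : u ≠ 0)
    (hdisj : ∀ S ∈ u.support, S ∉ v.support) :
    ∃ a b r, quadMoves (AddCon.ker (baseWeight base mark)) a b ∧
      u = a + r ∧ ∃ S ∈ b.support, S ∈ v.support := by
  simp only [baseWeight_apply, Prod.ext_iff] at h
  obtain ⟨hbase, hweight⟩ := h
  have hwu : weight mark u ≠ 0 := by
    intro h0
    obtain ⟨T, hT⟩ := Finsupp.support_nonempty_iff.2 hu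
    obtain ⟨S, hS, -, hST⟩ := exists_mem_support_mark_ne hinj hbase hdisj hT
    have h0' : weight mark v = 0 := hweight ▸ h0
    rw [weight_eq_zero_iff.1 h0 T hT, weight_eq_zero_iff.1 h0' S hS] at hST
    exact hST rfl
  have hwv : weight mark v ≠ 0 := hweight ▸ hwu
  obtain ⟨T₀, hT₀, hm₀⟩ := not_forall₂.1 (mt weight_eq_zero_iff.2 hwu)
  obtain ⟨T₁, hT₁, hm₁⟩ := not_forall₂.1 (mt weight_eq_zero_iff.2 hwv)
  obtain ⟨S₀, hS₀, hb₀, hn₀⟩ := exists_mem_support_mark_ne hinj hbase hdisj hT₀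
  obtain ⟨S₁, hS₁, hb₁, hn₁⟩ :=
    exists_mem_support_mark_ne hinj hbase.symm (fun S hS hS' => hdisj S hS' hS) hT₁
  have := hmark T₀; have := hmark T₁; have := hmark S₀; have := hmark S₁
  have hne : T₀ ≠ S₁ := by rintro rfl; omega
  have hle : single T₀ 1 + single S₁ 1 ≤ u := by
    classical
    intro T
    have h₀ := Finsupp.mem_support_iff.1 hT₀
    have h₁ := Finsupp.mem_support_iff.1 hS₁
    simp only [Finsupp.coe_add, Pi.add_apply, single_apply]
    split_ifs <;> subst_vars <;> omega
  -- swap the marks: `x_{T₀} x_{S₁} → x_{S₀} x_{T₁}`, after which `S₀` is shared with `v`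
  refine ⟨single T₀ 1 + single S₁ 1, single S₀ 1 + single T₁ 1,
    u - (single T₀ 1 + single S₁ 1), ⟨by simp, by simp, (AddCon.ker_rel _).2 ?_⟩,
    (add_tsub_cancel_of_le hle).symm, S₀, ?_, hS₀⟩
  · refine Prod.ext ?_ ?_ <;>
      simp only [baseWeight_apply, map_add, Prod.fst_add, Prod.snd_add, mapDomain_single,
        weight_single, smul_eq_mul, hb₀, hb₁]
    omega
  · simp

lemma ker_baseWeight_of_single_add {u v : σ' →₀ ℕ} {S : σ'}
    (h : AddCon.ker (baseWeight base mark) (single S 1 + u) (single S 1 + v)) :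
    AddCon.ker (baseWeight base mark) u v := by
  rw [AddCon.ker_rel, map_add, map_add] at h
  exact add_left_cancel h

theorem isGeneratedInDegreeTwo_ker_baseWeight (hmark : ∀ T, mark T ≤ 1)
    (hinj : Injective fun T => (base T, mark T)) :
    IsGeneratedInDegreeTwo (AddCon.ker (baseWeight base mark)) := by
  set κ := AddCon.ker (baseWeight base mark)
  set c' := addConGen (quadMoves κ)
  have hc'κ : c' ≤ κ := AddCon.addConGen_le.2 fun a b h => h.2.2
  suffices ∀ n (u v : σ' →₀ ℕ), u.degree = n → κ u v → c' u v from
    fun u v h => this _ u v rfl h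
  intro n
  induction n with
  | zero =>
    intro u v hu h
    have hv : v.degree = 0 := by
      have hbase : u.mapDomain base = v.mapDomain base :=
        congrArg Prod.fst ((AddCon.ker_rel _).1 h)
      rw [← degree_mapDomain base v, ← hbase, degree_mapDomain, hu]
    rw [(degree_eq_zero_iff u).1 hu, (degree_eq_zero_iff v).1 hv]
    exact c'.refl 0
  | succ n ih =>
    intro u v hu h
    have common (u' : σ' →₀ ℕ) (hu' : u'.degree = n + 1) (h' : κ u' v) (S : σ')
        (hSu : S ∈ u'.support) (hSv : S ∈ v.support) : c' u' v := by
      rw [← single_add_sub_of_mem_support hSu, ← single_add_sub_of_mem_support hSv] at h' ⊢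
      rw [← single_add_sub_of_mem_support hSu, map_add, degree_single] at hu'
      exact c'.add (c'.refl _) (ih _ _ (by omega) (ker_baseWeight_of_single_add h'))
    by_cases hcom : ∃ S ∈ u.support, S ∈ v.support
    · obtain ⟨S, hSu, hSv⟩ := hcom
      exact common u hu h S hSu hSv
    · push Not at hcom
      have hu0 : u ≠ 0 := by rintro rfl; simp at hu
      obtain ⟨a, b, r, hab, rfl, S, hSb, hSv⟩ :=
        exists_move_sharing_support hmark hinj h hu0 hcom
      have hmove : c' (a + r) (b + r) := c'.add (AddConGen.Rel.of _ _ hab) (c'.refl r)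
      refine c'.trans hmove (common _ ?_ (κ.trans (κ.symm (hc'κ hmove)) h) S ?_ hSv)
      · rw [map_add] at hu ⊢
        rw [hab.1] at hu
        rw [hab.2.1, hu]
      · rw [Finsupp.mem_support_iff] at hSb ⊢
        rw [Finsupp.add_apply]
        omega

end Fibre

section Lifting

variable {σ σ' τ : Type} {E : (σ →₀ ℕ) →+ (τ →₀ ℕ)} {c : τ} {base : σ' → σ}
  {mark : σ' → ℕ}

def MarksFillFibres (E : (σ →₀ ℕ) →+ (τ →₀ ℕ)) (c : τ) (base : σ' → σ)
    (mark : σ' → ℕ) : Prop :=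
  ∀ b k, (∃ T, base T = b ∧ mark T = k) ↔ k ≤ E (single b 1) c

lemma weight_le_apply_mapDomain (hfib : MarksFillFibres E c base mark) (u : σ' →₀ ℕ) :
    weight mark u ≤ E (u.mapDomain base) c := by
  induction u using Finsupp.induction_linear with
  | zero => simp
  | add u v hu hv =>
    rw [map_add, mapDomain_add, map_add, Finsupp.add_apply]
    exact add_le_add hu hv
  | single T m =>
    rw [weight_single, mapDomain_single, ← smul_single_one, map_nsmul, Finsupp.smul_apply]
    exact Nat.mul_le_mul_left m ((hfib _ _).1 ⟨T, rfl, rfl⟩)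

lemma exists_mapDomain_eq_weight_eq (hfib : MarksFillFibres E c base mark)
    (hc : ∀ b, E (single b 1) c ≤ 1) (n : σ →₀ ℕ) {k : ℕ} (hk : k ≤ E n c) :
    ∃ u : σ' →₀ ℕ, u.mapDomain base = n ∧ weight mark u = k := by
  induction n using Finsupp.induction_linear generalizing k with
  | zero =>
    rw [map_zero, Finsupp.coe_zero, Pi.zero_apply, Nat.le_zero] at hk
    exact ⟨0, mapDomain_zero, by rw [hk, map_zero]⟩
  | add n₁ n₂ ih₁ ih₂ =>
    rw [map_add, Finsupp.add_apply] at hk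
    obtain ⟨u₁, hu₁, hw₁⟩ := ih₁ (min_le_right k (E n₁ c))
    obtain ⟨u₂, hu₂, hw₂⟩ := ih₂ (k := k - min k (E n₁ c)) (by omega)
    refine ⟨u₁ + u₂, by rw [mapDomain_add, hu₁, hu₂], ?_⟩
    rw [map_add, hw₁, hw₂]
    omega
  | single b m =>
    rw [← smul_single_one, map_nsmul, Finsupp.smul_apply, smul_eq_mul] at hk
    have hcb := hc b
    have hkm : k ≤ m := hk.trans (by nlinarith)
    obtain ⟨T₀, hT₀, hm₀⟩ := (hfib b 0).2 (Nat.zero_le _)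
    obtain ⟨T₁, hT₁, hm₁⟩ : ∃ T, base T = b ∧ k * mark T = k := by
      rcases Nat.eq_zero_or_pos k with rfl | hk0
      · exact ⟨T₀, hT₀, zero_mul _⟩
      · obtain ⟨T, hT, hm⟩ := (hfib b 1).2 (by nlinarith)
        exact ⟨T, hT, by rw [hm, mul_one]⟩
    refine ⟨single T₁ k + single T₀ (m - k), ?_, ?_⟩
    · rw [mapDomain_add, mapDomain_single, mapDomain_single, hT₀, hT₁, ← single_add]
      congr 1
      omega
    · rw [map_add, weight_single, weight_single, hm₀, smul_eq_mul, hm₁, smul_zero, add_zero]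

def LiftsRelated (κ : AddCon (σ' →₀ ℕ)) (base : σ' → σ) (mark : σ' → ℕ)
    (n n' : σ →₀ ℕ) : Prop :=
  ∀ u v : σ' →₀ ℕ, u.mapDomain base = n → v.mapDomain base = n' →
    weight mark u = weight mark v → κ u v

variable {κ : AddCon (σ' →₀ ℕ)} {n₁ n₂ n₃ n₁' n₂' : σ →₀ ℕ}

lemma LiftsRelated.symm (h : LiftsRelated κ base mark n₁ n₂) :
    LiftsRelated κ base mark n₂ n₁ :=
  fun u v hu hv hw => κ.symm (h v u hv hu hw.symm)

lemma LiftsRelated.trans (hfib : MarksFillFibres E c base mark)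
    (hc : ∀ b, E (single b 1) c ≤ 1) (hE : E n₁ c = E n₂ c)
    (h₁ : LiftsRelated κ base mark n₁ n₂) (h₂ : LiftsRelated κ base mark n₂ n₃) :
    LiftsRelated κ base mark n₁ n₃ := by
  rintro u v rfl hv hw
  obtain ⟨w, hw₁, hw₂⟩ :=
    exists_mapDomain_eq_weight_eq hfib hc _ ((weight_le_apply_mapDomain hfib u).trans_eq hE)
  exact κ.trans (h₁ u w rfl hw₁ hw₂.symm) (h₂ w v hw₁ hv (hw₂.trans hw))

lemma LiftsRelated.add (hfib : MarksFillFibres E c base mark)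
    (hc : ∀ b, E (single b 1) c ≤ 1) (hrefl : ∀ n, LiftsRelated κ base mark n n)
    (hE₁ : E n₁ c = E n₁' c) (hE₂ : E n₂ c = E n₂' c)
    (h₁ : LiftsRelated κ base mark n₁ n₁') (h₂ : LiftsRelated κ base mark n₂ n₂') :
    LiftsRelated κ base mark (n₁ + n₂) (n₁' + n₂') := by
  intro u v hu hv hw
  have hk := weight_le_apply_mapDomain hfib u
  rw [hu, map_add, Finsupp.add_apply] at hk
  set k₁ := min (weight mark u) (E n₁ c)
  have hk₁ : k₁ ≤ E n₁ c := min_le_right _ _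
  have hk₂ : weight mark u - k₁ ≤ E n₂ c := by omega
  obtain ⟨u₁, hu₁, hw₁⟩ := exists_mapDomain_eq_weight_eq hfib hc n₁ hk₁
  obtain ⟨u₂, hu₂, hw₂⟩ := exists_mapDomain_eq_weight_eq hfib hc n₂ hk₂
  obtain ⟨v₁, hv₁, hw₁'⟩ :=
    exists_mapDomain_eq_weight_eq hfib hc n₁' (hk₁.trans_eq hE₁)
  obtain ⟨v₂, hv₂, hw₂'⟩ :=
    exists_mapDomain_eq_weight_eq hfib hc n₂' (hk₂.trans_eq hE₂)
  have hsplit_u : κ u (u₁ + u₂) :=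
    hrefl _ _ _ hu (by rw [mapDomain_add, hu₁, hu₂]) (by rw [map_add, hw₁, hw₂]; omega)
  have hsplit_v : κ (v₁ + v₂) v :=
    hrefl _ _ _ (by rw [mapDomain_add, hv₁, hv₂]) hv
      (by rw [map_add, hw₁', hw₂', ← hw]; omega)
  exact κ.trans hsplit_u (κ.trans (κ.add (h₁ u₁ v₁ hu₁ hv₁ (hw₁.trans hw₁'.symm))
    (h₂ u₂ v₂ hu₂ hv₂ (hw₂.trans hw₂'.symm))) hsplit_v)

theorem isGeneratedInDegreeTwo_ker_comp_mapDomain_prod_weight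
    (hinj : Injective fun T => (base T, mark T)) (hfib : MarksFillFibres E c base mark)
    (hc : ∀ b, E (single b 1) c ≤ 1) (hE : IsGeneratedInDegreeTwo (AddCon.ker E)) :
    IsGeneratedInDegreeTwo
      (AddCon.ker ((E.comp (mapDomain.addMonoidHom base)).prod (weight mark))) := by
  set κ := AddCon.ker ((E.comp (mapDomain.addMonoidHom base)).prod (weight mark))
  have hrefl (n : σ →₀ ℕ) : LiftsRelated (addConGen (quadMoves κ)) base mark n n := by
    rintro u v rfl hv hw
    have hmark (T : σ') : mark T ≤ 1 := ((hfib _ _).1 ⟨T, rfl, rfl⟩).trans (hc _)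
    have hfibre := isGeneratedInDegreeTwo_ker_baseWeight hmark hinj
      ((AddCon.ker_rel _).2 (Prod.ext hv.symm hw))
    refine AddCon.addConGen_mono (fun a b ⟨ha, hb, hab⟩ => ⟨ha, hb, ?_⟩) hfibre
    obtain ⟨h₁, h₂⟩ := Prod.ext_iff.1 ((AddCon.ker_rel _).1 hab)
    exact (AddCon.ker_rel _).2 (Prod.ext (congrArg E h₁) h₂)
  have hEc {n n' : σ →₀ ℕ} (h : addConGen (quadMoves (AddCon.ker E)) n n') :
      E n c = E n' c :=
    congrArg (· c) (AddCon.addConGen_le.2 (fun a b h => h.2.2) h)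
  suffices ∀ n n', addConGen (quadMoves (AddCon.ker E)) n n' →
      LiftsRelated (addConGen (quadMoves κ)) base mark n n' by
    intro u v huv
    obtain ⟨h₁, h₂⟩ := Prod.ext_iff.1 ((AddCon.ker_rel _).1 huv)
    exact this _ _ (hE ((AddCon.ker_rel _).2 h₁)) u v rfl rfl h₂
  intro n n' h
  induction h with
  | of a b hab =>
    rintro u v rfl rfl hw
    refine AddConGen.Rel.of u v ⟨?_, ?_, (AddCon.ker_rel _).2 (Prod.ext hab.2.2 hw)⟩
    · rw [← degree_mapDomain base u, hab.1]
    · rw [← degree_mapDomain base v, hab.2.1]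
  | refl n => exact hrefl n
  | symm _ ih => exact ih.symm
  | trans h₁ _ ih₁ ih₂ => exact ih₁.trans hfib hc (hEc h₁) ih₂
  | add h₁ h₂ ih₁ ih₂ => exact .add hfib hc hrefl (hEc h₁) (hEc h₂) ih₁ ih₂

end Lifting

section ParallelExtension

variable {d : ℕ}

lemma Matroid.dual_isBase_iff_isBase_compl {α : Type} {M : Matroid α} (hE : M.E = Set.univ)
    {S : Set α} : M✶.IsBase S ↔ M.IsBase Sᶜ := by
  rw [Matroid.dual_isBase_iff', hE, ← Set.compl_eq_univ_sdiff, and_iff_left (Set.subset_univ S)]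

lemma compl_image_castSucc (B : Set (Fin d)) :
    (Fin.castSucc '' B)ᶜ = Fin.castSucc '' Bᶜ ∪ {Fin.last d} := by
  ext x
  induction x using Fin.lastCases with
  | last => simp [Fin.castSucc_ne_last]
  | cast y => simp [Fin.castSucc_ne_last]

/-- Renames `c` to the new element `Fin.last d`. -/
def parallelEmb (c : Fin d) : Fin d → Fin (d + 1) :=
  Equiv.swap (Fin.castSucc c) (Fin.last d) ∘ Fin.castSucc

def IsParallelExtension (N : Matroid (Fin (d + 1))) (M : Matroid (Fin d)) (c : Fin d) : Prop :=
  ∀ S, N.IsBase S ↔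
    ∃ B, M.IsBase B ∧ (S = Fin.castSucc '' B ∨ c ∈ B ∧ S = parallelEmb c '' B)

lemma image_castSucc_union_castSucc {B : Set (Fin d)} {c : Fin d} (hc : c ∉ B) :
    Fin.castSucc '' B ∪ {Fin.castSucc c} =
      Equiv.swap (Fin.castSucc c) (Fin.last d) '' (Fin.castSucc '' B ∪ {Fin.last d}) := by
  rw [Set.image_union, Set.image_singleton, Equiv.swap_apply_right, Set.image_image]
  congr 1
  refine (Set.image_congr fun x hx => Equiv.swap_apply_of_ne_of_ne ?_ ?_).symm
  · exact fun h => hc (Fin.castSucc_injective d h ▸ hx)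
  · exact Fin.castSucc_ne_last x

theorem isParallelExtension_dual_of_isBase_iff (M : Matroid (Fin d)) (hE : M.E = Set.univ)
    (c : Fin d) (M' : Matroid (Fin (d + 1))) (hE' : M'.E = Set.univ)
    (hM' : ∀ S : Set (Fin (d + 1)), M'.IsBase S ↔
      ((∃ B : Set (Fin d), (M✶).IsBase B ∧ S = Fin.castSucc '' B ∪ {Fin.last d}) ∨
       (∃ B : Set (Fin d), (M✶).IsBase B ∧ c ∉ B ∧
          S = Fin.castSucc '' B ∪ {Fin.castSucc c}))) :
    IsParallelExtension (M'✶) M c := by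
  intro S
  have h₀ (B : Set (Fin d)) :
      Sᶜ = Fin.castSucc '' Bᶜ ∪ {Fin.last d} ↔ S = Fin.castSucc '' B := by
    rw [← compl_image_castSucc, compl_inj_iff]
  have h₁ {B : Set (Fin d)} (hc : c ∈ B) :
      Sᶜ = Fin.castSucc '' Bᶜ ∪ {Fin.castSucc c} ↔ S = parallelEmb c '' B := by
    rw [image_castSucc_union_castSucc (Set.notMem_compl_iff.2 hc), ← compl_image_castSucc,
      Set.image_compl_eq (Equiv.bijective _), compl_inj_iff, parallelEmb, Set.image_comp]
  rw [Matroid.dual_isBase_iff_isBase_compl hE', hM', ← exists_or]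
  conv_rhs => rw [compl_surjective.exists]
  refine exists_congr fun B => ?_
  rw [Matroid.dual_isBase_iff_isBase_compl hE, ← and_or_left, Set.mem_compl_iff]
  refine and_congr_right fun _ => or_congr (by simpa only [compl_compl] using h₀ Bᶜ) ?_
  exact and_congr_right fun hc => by simpa only [compl_compl] using h₁ (Set.mem_compl hc)


def collapse (c : Fin d) : Fin (d + 1) → Fin d :=
  Fin.lastCases c id

lemma collapse_castSucc (c : Fin d) : LeftInverse (collapse c) Fin.castSucc :=
  fun l => Fin.lastCases_castSucc l

lemma collapse_parallelEmb (c : Fin d) : LeftInverse (collapse c) (parallelEmb c) := by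
  intro l
  by_cases hl : l = c
  · subst hl
    simp [parallelEmb, collapse]
  · rw [parallelEmb, comp_apply, Equiv.swap_apply_of_ne_of_ne
      (fun h => hl (Fin.castSucc_injective d h)) (Fin.castSucc_ne_last l)]
    exact collapse_castSucc c l

lemma parallelEmb_eq_last_iff {c l : Fin d} : parallelEmb c l = Fin.last d ↔ l = c := by
  rw [parallelEmb, comp_apply, Equiv.swap_apply_eq_iff, Equiv.swap_apply_right]
  exact (Fin.castSucc_injective d).eq_iff

lemma mapDomain_collapse_apply (c : Fin d) (x : Fin (d + 1) →₀ ℕ) (l : Fin d) :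
    x.mapDomain (collapse c) l = x (Fin.castSucc l) + if l = c then x (Fin.last d) else 0 := by
  classical
  rw [mapDomain, Finsupp.sum_apply, Finsupp.sum_fintype _ _ (by simp), Fin.sum_univ_castSucc]
  simp [single_apply, collapse, eq_comm]

lemma injective_mapDomain_collapse_prod_apply_last (c : Fin d) :
    Injective fun x : Fin (d + 1) →₀ ℕ => (x.mapDomain (collapse c), x (Fin.last d)) := by
  intro x y h
  obtain ⟨h₁, h₂⟩ := Prod.mk.inj h
  ext z
  induction z using Fin.lastCases with
  | last => exact h₂
  | cast l =>
    have := DFunLike.congr_fun h₁ l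
    rw [mapDomain_collapse_apply, mapDomain_collapse_apply, h₂] at this
    omega

lemma image_image_collapse {c : Fin d} {ι : Fin d → Fin (d + 1)}
    (hι : LeftInverse (collapse c) ι) (b : Finset (Fin d)) :
    (b.image ι).image (collapse c) = b := by
  rw [Finset.image_image, hι.comp_eq_id, Finset.image_id]

variable {N : Matroid (Fin (d + 1))} {M : Matroid (Fin d)} {c : Fin d}

lemma IsParallelExtension.isBase_finset_iff (hN : IsParallelExtension N M c)
    (T : Finset (Fin (d + 1))) :
    N.IsBase ↑T ↔ ∃ b : Finset (Fin d), M.IsBase ↑b ∧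
      (T = b.image Fin.castSucc ∨ c ∈ b ∧ T = b.image (parallelEmb c)) := by
  rw [hN]
  constructor
  · rintro ⟨B, hB, hT⟩
    have key {ι : Fin d → Fin (d + 1)} (hι : LeftInverse (collapse c) ι)
        (hT : ↑T = ι '' B) :
        ↑(T.image (collapse c)) = B ∧ T = (T.image (collapse c)).image ι := by
      have hb : ↑(T.image (collapse c)) = B := by
        rw [Finset.coe_image, hT, hι.image_image]
      exact ⟨hb, Finset.coe_injective (by rw [Finset.coe_image, hb, hT])⟩
    refine ⟨T.image (collapse c), ?_⟩
    rcases hT with hT | ⟨hc, hT⟩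
    · obtain ⟨hb, hT⟩ := key (collapse_castSucc c) hT
      exact ⟨hb ▸ hB, Or.inl hT⟩
    · obtain ⟨hb, hT⟩ := key (collapse_parallelEmb c) hT
      exact ⟨hb ▸ hB, Or.inr ⟨by rwa [← Finset.mem_coe, hb], hT⟩⟩
  · rintro ⟨b, hb, hT⟩
    refine ⟨b, hb, ?_⟩
    rcases hT with rfl | ⟨hc, rfl⟩
    · exact Or.inl (Finset.coe_image)
    · exact Or.inr ⟨hc, Finset.coe_image⟩

def IsParallelExtension.base (hN : IsParallelExtension N M c)
    (T : {T : Finset (Fin (d + 1)) // N.IsBase ↑T}) : {b : Finset (Fin d) // M.IsBase ↑b} :=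
  ⟨T.1.image (collapse c), by
    obtain ⟨b, hb, hT | ⟨-, hT⟩⟩ := (hN.isBase_finset_iff _).1 T.2
    · rwa [hT, image_image_collapse (collapse_castSucc c)]
    · rwa [hT, image_image_collapse (collapse_parallelEmb c)]⟩

@[simp]
lemma IsParallelExtension.coe_base (hN : IsParallelExtension N M c)
    (T : {T : Finset (Fin (d + 1)) // N.IsBase ↑T}) : (hN.base T).1 = T.1.image (collapse c) :=
  rfl

lemma IsParallelExtension.eq_image_base (hN : IsParallelExtension N M c)
    (T : {T : Finset (Fin (d + 1)) // N.IsBase ↑T}) :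
    Fin.last d ∉ T.1 ∧ T.1 = (hN.base T).1.image Fin.castSucc ∨
      Fin.last d ∈ T.1 ∧ c ∈ (hN.base T).1 ∧ T.1 = (hN.base T).1.image (parallelEmb c) := by
  obtain ⟨b, -, hT | ⟨hc, hT⟩⟩ := (hN.isBase_finset_iff _).1 T.2
  · have hb : (hN.base T).1 = b := by
      rw [hN.coe_base, hT, image_image_collapse (collapse_castSucc c)]
    refine Or.inl ⟨?_, hb ▸ hT⟩
    simp [hT, Fin.castSucc_ne_last]
  · have hb : (hN.base T).1 = b := by
      rw [hN.coe_base, hT, image_image_collapse (collapse_parallelEmb c)]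
    refine Or.inr ⟨?_, hb ▸ hc, hb ▸ hT⟩
    rw [hT]
    exact Finset.mem_image.2 ⟨c, hc, parallelEmb_eq_last_iff.2 rfl⟩

def lastMark (T : {T : Finset (Fin (d + 1)) // N.IsBase ↑T}) : ℕ :=
  if Fin.last d ∈ T.1 then 1 else 0

lemma IsParallelExtension.injective_base_lastMark (hN : IsParallelExtension N M c) :
    Injective fun T => (hN.base T, lastMark T) := by
  intro T T' h
  obtain ⟨hb, hm⟩ := Prod.mk.inj h
  simp only [lastMark] at hm
  apply Subtype.ext
  rcases hN.eq_image_base T with ⟨hl, hT⟩ | ⟨hl, -, hT⟩ <;>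
    rcases hN.eq_image_base T' with ⟨hl', hT'⟩ | ⟨hl', -, hT'⟩ <;>
    simp only [hl, hl', if_true, if_false] at hm <;>
    first | omega | rw [hT, hT', hb]

lemma IsParallelExtension.marksFillFibres (hN : IsParallelExtension N M c) :
    MarksFillFibres (basesExponent M) c hN.base lastMark := by
  intro b k
  rw [basesExponent_single, indicatorExp_apply]
  constructor
  · rintro ⟨T, rfl, rfl⟩
    rcases hN.eq_image_base T with ⟨hl, -⟩ | ⟨hl, hc, -⟩
    · simp [lastMark, hl]
    · rw [if_pos hc]
      simp [lastMark, hl]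
  · intro hk
    have lift {ι : Fin d → Fin (d + 1)} (hι : LeftInverse (collapse c) ι)
        (hT : N.IsBase ↑(b.1.image ι)) : hN.base ⟨b.1.image ι, hT⟩ = b :=
      Subtype.ext (image_image_collapse hι b.1)
    obtain rfl | rfl : k = 0 ∨ k = 1 := by split_ifs at hk <;> omega
    · refine ⟨⟨_, (hN.isBase_finset_iff _).2 ⟨b.1, b.2, Or.inl rfl⟩⟩,
        lift (collapse_castSucc c) _, ?_⟩
      simp [lastMark, Fin.castSucc_ne_last]
    · have hc : c ∈ b.1 := by
        by_contra hc
        rw [if_neg hc] at hk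
        omega
      refine ⟨⟨_, (hN.isBase_finset_iff _).2 ⟨b.1, b.2, Or.inr ⟨hc, rfl⟩⟩⟩,
        lift (collapse_parallelEmb c) _, ?_⟩
      simp only [lastMark, if_pos (Finset.mem_image.2 ⟨c, hc, parallelEmb_eq_last_iff.2 rfl⟩)]

lemma IsParallelExtension.collapse_comp_basesExponent (hN : IsParallelExtension N M c) :
    ((mapDomain.addMonoidHom (collapse c)).prod (applyAddHom (Fin.last d))).comp
        (basesExponent N) =
      ((basesExponent M).comp (mapDomain.addMonoidHom hN.base)).prod
        (weight (R := ℕ) lastMark) := by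
  refine Finsupp.addHom_ext fun T m => ?_
  have hT : (indicatorExp T.1).mapDomain (collapse c) = indicatorExp (hN.base T).1 := by
    rcases hN.eq_image_base T with ⟨-, hT⟩ | ⟨-, -, hT⟩ <;> rw [hT]
    · exact mapDomain_indicatorExp_image (collapse_castSucc c) _
    · exact mapDomain_indicatorExp_image (collapse_parallelEmb c) _
  rw [← smul_single_one]
  simp only [map_nsmul, AddMonoidHom.comp_apply, AddMonoidHom.prod_apply, basesExponent_single,
    mapDomain.addMonoidHom_apply, mapDomain_single, applyAddHom_apply, weight_single, smul_eq_mul,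
    hT, indicatorExp_apply, lastMark, one_mul]

lemma IsParallelExtension.ker_basesExponent (hN : IsParallelExtension N M c) :
    AddCon.ker (basesExponent N) = AddCon.ker (((basesExponent M).comp
      (mapDomain.addMonoidHom hN.base)).prod (weight (R := ℕ) lastMark)) := by
  ext u v
  rw [AddCon.ker_rel, AddCon.ker_rel, ← hN.collapse_comp_basesExponent]
  exact (injective_mapDomain_collapse_prod_apply_last c).eq_iff.symm

end ParallelExtension

/-- If the toric ideal of `M` is generated by quadratic binomials, then so is the toric
ideal of the parallel extension `(M✶ +_c (d+1))✶` of `M` at `c` by `d+1`; here `M'` is the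
series extension `M✶ +_c (d+1)` of the dual matroid. -/
theorem statement7 (K : Type) [Field K] {d : ℕ}
    (M : Matroid (Fin d)) (hE : M.E = Set.univ) (c : Fin d)
    (M' : Matroid (Fin (d + 1))) (hE' : M'.E = Set.univ)
    (hM' : ∀ S : Set (Fin (d + 1)), M'.IsBase S ↔
      ((∃ B : Set (Fin d), (M✶).IsBase B ∧ S = Fin.castSucc '' B ∪ {Fin.last d}) ∨
       (∃ B : Set (Fin d), (M✶).IsBase B ∧ c ∉ B ∧
          S = Fin.castSucc '' B ∪ {Fin.castSucc c})))
    (h : GeneratedByQuadBinomials (matroidToricIdeal K M)) :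
    GeneratedByQuadBinomials (matroidToricIdeal K (M'✶)) := by
  have hN := isParallelExtension_dual_of_isBase_iff M hE c M' hE' hM'
  rw [matroidToricIdeal_eq_ker_toricMap, generatedByQuadBinomials_ker_toricMap_iff] at h ⊢
  rw [hN.ker_basesExponent]
  refine isGeneratedInDegreeTwo_ker_comp_mapDomain_prod_weight hN.injective_base_lastMark
    hN.marksFillFibres (fun b => ?_) h
  rw [basesExponent_single, indicatorExp_apply]
  split_ifs <;> simp
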